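/- Define, for a positive integer n, the density r⁽ⁿ⁾ on [0,1] by r⁽ⁿ⁾(x) = 1 on [0, 1−1/n), 1/2 on [1−1/n, 1−1/(2n)), and 3/2 on [1−1/(2n), 1]. Then for any interval I ⊆ [0,1] with ∫_I r⁽ⁿ⁾ ≥ 1/n, the Lebesgue measure of I is at least 1/n. -/

import Mathlib

open MeasureTheory Set intervalIntegral

/-- The density `r⁽ⁿ⁾`: `1` on `[0, 1−1/n)`, `1/2` on `[1−1/n, 1−1/(2n))`, `3/2` on `[1−1/(2n), 1]`. -/
noncomputable def rdens (n : ℕ) : ℝ → ℝ := fun x =>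
  if x < 1 - 1 / n then 1 else if x < 1 - 1 / (2 * n) then 1/2 else 3/2

/-!
With `c = 1 - 1/n` and `m = 1 - 1/(2n)`, the density `r⁽ⁿ⁾` is the right derivative of the
piecewise linear `F x = x - (x - c)⁺ / 2 + (x - m)⁺`, so `∫_a^b r⁽ⁿ⁾ = F b - F a`.
`F` is strictly increasing, and because `m` is the midpoint of `[c, 1]` the increment of `F` over
a window `[b - 1/n, b]` with `b ≤ 1` is at most `1/n`. An interval `[a, b]` shorter than `1/n`
lies strictly inside such a window, so its `F`-increment is `< 1/n`.
-/

theorem hasDerivWithinAt_max_sub_zero_Ioi (t x : ℝ) :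
    HasDerivWithinAt (fun y => max (y - t) 0) (if t ≤ x then 1 else 0) (Ioi x) x := by
  split_ifs with htx
  · refine ((hasDerivAt_id x).sub_const t).hasDerivWithinAt.congr (fun y hy => ?_) ?_
    · exact max_eq_left (by rw [mem_Ioi] at hy; linarith)
    · exact max_eq_left (by linarith)
  · refine ((hasDerivAt_const x (0 : ℝ)).congr_of_eventuallyEq ?_).hasDerivWithinAt
    filter_upwards [Iio_mem_nhds (not_le.mp htx)] with y hy
    exact max_eq_right (by rw [mem_Iio] at hy; linarith)

noncomputable def rdensPrimitive (n : ℕ) (x : ℝ) : ℝ :=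
  x - max (x - (1 - 1 / n)) 0 / 2 + max (x - (1 - 1 / (2 * n))) 0

theorem continuous_rdensPrimitive (n : ℕ) : Continuous (rdensPrimitive n) := by
  unfold rdensPrimitive
  fun_prop

theorem hasDerivWithinAt_rdensPrimitive (n : ℕ) (x : ℝ) :
    HasDerivWithinAt (rdensPrimitive n) (rdens n x) (Ioi x) x := by
  have hcm : 1 - 1 / (n : ℝ) ≤ 1 - 1 / (2 * n) := by
    rw [div_mul_eq_div_div_swap]
    linarith [one_div_nonneg.mpr (Nat.cast_nonneg (α := ℝ) n)]
  refine (((hasDerivWithinAt_id x _).sub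
    ((hasDerivWithinAt_max_sub_zero_Ioi _ x).div_const 2)).add
    (hasDerivWithinAt_max_sub_zero_Ioi _ x)).congr_deriv ?_
  unfold rdens
  split_ifs <;> norm_num <;> linarith

theorem measurable_rdens (n : ℕ) : Measurable (rdens n) :=
  measurable_const.ite measurableSet_Iio (measurable_const.ite measurableSet_Iio measurable_const)

theorem abs_rdens_le (n : ℕ) (x : ℝ) : |rdens n x| ≤ 3 / 2 := by
  unfold rdens
  split_ifs <;> norm_num

theorem intervalIntegrable_rdens (n : ℕ) (a b : ℝ) : IntervalIntegrable (rdens n) volume a b :=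
  (intervalIntegrable_const (c := (3 / 2 : ℝ))).mono_fun (measurable_rdens n).aestronglyMeasurable
    (Filter.Eventually.of_forall fun x => by simpa using abs_rdens_le n x)

theorem integral_rdens (n : ℕ) (a b : ℝ) :
    ∫ x in a..b, rdens n x = rdensPrimitive n b - rdensPrimitive n a :=
  integral_eq_sub_of_hasDeriv_right (continuous_rdensPrimitive n).continuousOn
    (fun x _ => hasDerivWithinAt_rdensPrimitive n x) (intervalIntegrable_rdens n a b)

theorem strictMono_rdensPrimitive (n : ℕ) : StrictMono (rdensPrimitive n) := by
  intro x y hxy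
  unfold rdensPrimitive
  rw [div_mul_eq_div_div_swap]
  simp only [max_def]
  split_ifs <;> linarith

theorem rdensPrimitive_sub_le (n : ℕ) {b : ℝ} (hb : b ≤ 1) :
    rdensPrimitive n b - rdensPrimitive n (b - 1 / n) ≤ 1 / n := by
  have : (0 : ℝ) ≤ 1 / n := by positivity
  unfold rdensPrimitive
  rw [div_mul_eq_div_div_swap]
  simp only [max_def]
  split_ifs <;> linarith

theorem rdens_proportional_implies_length_general (n : ℕ) (a b : ℝ)
    (hb : b ≤ 1)
    (hval : (∫ x in a..b, rdens n x) ≥ 1 / n) :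
    b - a ≥ 1 / n := by
  by_contra! hshort
  have hwindow := rdensPrimitive_sub_le n hb
  have hstart := strictMono_rdensPrimitive n (show b - 1 / n < a by linarith)
  rw [integral_rdens] at hval
  linarith

/-- Any interval `I = [a,b] ⊆ [0,1]` with `∫_I r⁽ⁿ⁾ ≥ 1/n` has length at least `1/n`. -/
theorem rdens_proportional_implies_length (n : ℕ) (hn : 1 ≤ n) (a b : ℝ)
    (ha : 0 ≤ a) (hab : a ≤ b) (hb : b ≤ 1)
    (hval : (∫ x in a..b, rdens n x) ≥ 1 / n) :
    b - a ≥ 1 / n :=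
  rdens_proportional_implies_length_general n a b hb hval
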